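/- arXiv:2408.02059 — 2 statements merged into one kernel-verified Lean document; each statement's English description precedes it below -/
import Mathlib

section
/- Theorem 3.4, T type I (Pearson type VII) case: Let β ∈ {1,2,4,8}, let K ≥ 1 and N ≥ 2 be integers, let t, r ∈ ℕ, let ν > 0, and let h be given on (−1/β, ∞) by h(y) = [Γ(β(K(N−1)+ν)/2) / ((πβ^{−1})^{βK(N−1)/2} Γ(βν/2))] · (1+βy)^{−β(K(N−1)+ν)/2}. Then γ_{t,r} := ∫₀^∞ v^{βK(N−1)/2 + t − 1} h^{(2t+r)}(v) dv = [β^{−t−βK(N−1)/2} Γ(t + βK(N−1)/2) Γ(t + r + βν/2) / Γ(2t + r + β(K(N−1)+ν)/2)] · h^{(2t+r)}(0), where h^{(2t+r)} denotes the (2t+r)-th derivative of h. -/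
/-!
On `(-1/β, ∞)` the function `h` is a constant multiple of `(1 + βy)^c`, so each derivative
satisfies `h⁽ᵐ⁾(y) = h⁽ᵐ⁾(0) (1 + βy)^(c - m)`. The kernel integral therefore reduces to
`h⁽ᵐ⁾(0) ∫₀^∞ v^(p-1) (1 + βv)^(-(p+b)) dv`, and the substitutions `x = βv` and
`x = u / (1 - u)` turn this into `β^(-p) B(p, b)`.
-/

open MeasureTheory Real Set

theorem integral_rpow_mul_one_sub_rpow {p b : ℝ} (hp : 0 < p) (hb : 0 < b) :
    ∫ x in (0 : ℝ)..1, x ^ (p - 1) * (1 - x) ^ (b - 1) = Gamma p * Gamma b / Gamma (p + b) := by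
  have hcast : ((∫ x in (0 : ℝ)..1, x ^ (p - 1) * (1 - x) ^ (b - 1) : ℝ) : ℂ) =
      Complex.betaIntegral p b := by
    rw [Complex.betaIntegral, ← intervalIntegral.integral_ofReal]
    refine intervalIntegral.integral_congr fun x hx => ?_
    rw [uIcc_of_le zero_le_one] at hx
    push_cast
    rw [Complex.ofReal_cpow hx.1, Complex.ofReal_cpow (sub_nonneg.2 hx.2)]
    push_cast
    rfl
  rw [Complex.betaIntegral_eq_Gamma_mul_div _ _ (by simpa) (by simpa), ← Complex.ofReal_add,
    Complex.Gamma_ofReal, Complex.Gamma_ofReal, Complex.Gamma_ofReal] at hcast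
  exact_mod_cast hcast

theorem image_div_one_sub_Ioo : (fun u : ℝ => u / (1 - u)) '' Ioo 0 1 = Ioi 0 := by
  ext x
  constructor
  · rintro ⟨u, ⟨hu0, hu1⟩, rfl⟩
    exact div_pos hu0 (sub_pos.2 hu1)
  · intro (hx : 0 < x)
    refine ⟨x / (1 + x), ⟨by positivity, (div_lt_one (by positivity)).2 (by linarith)⟩, ?_⟩
    field_simp
    ring

theorem integral_Ioi_rpow_mul_one_add_rpow_neg {p b : ℝ} (hp : 0 < p) (hb : 0 < b) :
    ∫ x in Ioi 0, x ^ (p - 1) * (1 + x) ^ (-(p + b)) = Gamma p * Gamma b / Gamma (p + b) := by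
  have hderiv : ∀ u ∈ Ioo (0 : ℝ) 1,
      HasDerivWithinAt (fun u : ℝ => u / (1 - u)) (1 / (1 - u) ^ 2) (Ioo 0 1) u := by
    intro u ⟨_, hu1⟩
    have h1u : 1 - u ≠ 0 := (sub_pos.2 hu1).ne'
    exact (((hasDerivAt_id' u).fun_div ((hasDerivAt_id' u).const_sub 1) h1u).congr_deriv
      (by ring)).hasDerivWithinAt
  have hinj : InjOn (fun u : ℝ => u / (1 - u)) (Ioo 0 1) := by
    intro u ⟨_, hu1⟩ v ⟨_, hv1⟩ huv
    have h1u : 1 - u ≠ 0 := (sub_pos.2 hu1).ne'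
    have h1v : 1 - v ≠ 0 := (sub_pos.2 hv1).ne'
    field_simp at huv
    linarith
  -- after `x = u / (1 - u)` the integrand becomes the Euler beta integrand on `(0, 1)`
  have hintegrand : ∀ u ∈ Ioo (0 : ℝ) 1,
      |1 / (1 - u) ^ 2| • ((u / (1 - u)) ^ (p - 1) * (1 + u / (1 - u)) ^ (-(p + b))) =
        u ^ (p - 1) * (1 - u) ^ (b - 1) := by
    intro u ⟨hu0, hu1⟩
    have h1u : 0 < 1 - u := sub_pos.2 hu1
    have hinv : 1 + u / (1 - u) = (1 - u)⁻¹ := by field_simp; ring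
    rw [hinv, smul_eq_mul, abs_of_pos (by positivity), div_rpow hu0.le h1u.le,
      inv_rpow h1u.le, ← rpow_neg h1u.le, neg_neg,
      show p + b = (p - 1) + 2 + (b - 1) by ring, rpow_add h1u, rpow_add h1u, rpow_two]
    field_simp
  rw [← image_div_one_sub_Ioo, integral_image_eq_integral_abs_deriv_smul measurableSet_Ioo
      hderiv hinj, setIntegral_congr_fun measurableSet_Ioo hintegrand,
    ← integral_Ioc_eq_integral_Ioo, ← intervalIntegral.integral_of_le zero_le_one]
  exact integral_rpow_mul_one_sub_rpow hp hb

theorem integral_Ioi_rpow_mul_one_add_mul_rpow_neg {β p b : ℝ} (hβ : 0 < β) (hp : 0 < p)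
    (hb : 0 < b) :
    ∫ v in Ioi 0, v ^ (p - 1) * (1 + β * v) ^ (-(p + b)) =
      β ^ (-p) * (Gamma p * Gamma b / Gamma (p + b)) := by
  have hscale : ∀ v ∈ Ioi (0 : ℝ), v ^ (p - 1) * (1 + β * v) ^ (-(p + b)) =
      β ^ (1 - p) * ((β * v) ^ (p - 1) * (1 + β * v) ^ (-(p + b))) := by
    intro v (hv : 0 < v)
    rw [mul_rpow hβ.le hv.le, ← mul_assoc, ← mul_assoc, ← rpow_add hβ]
    simp
  rw [setIntegral_congr_fun measurableSet_Ioi hscale, integral_const_mul,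
    integral_comp_mul_left_Ioi (fun x => x ^ (p - 1) * (1 + x) ^ (-(p + b))) 0 hβ, mul_zero,
    integral_Ioi_rpow_mul_one_add_rpow_neg hp hb, smul_eq_mul, ← mul_assoc,
    ← rpow_neg_one β, ← rpow_add hβ]
  ring_nf

theorem one_add_mul_pos_of_mem_Ioi {β y : ℝ} (hβ : 0 < β) (hy : y ∈ Ioi (-(1 / β))) :
    0 < 1 + β * y := by
  have := mul_lt_mul_of_pos_left (mem_Ioi.1 hy) hβ
  rw [mul_neg, mul_one_div_cancel hβ.ne'] at this
  linarith

section PowerOfAffine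

variable {β C c : ℝ} {h : ℝ → ℝ}

theorem iteratedDeriv_eqOn_of_eqOn_one_add_mul_rpow (hβ : 0 < β)
    (hh : EqOn h (fun y => C * (1 + β * y) ^ c) (Ioi (-(1 / β)))) (m : ℕ) :
    EqOn (iteratedDeriv m h)
      (fun y => C * β ^ m * (descPochhammer ℝ m).eval c * (1 + β * y) ^ (c - m))
      (Ioi (-(1 / β))) := by
  induction m with
  | zero => simpa using hh
  | succ m ih =>
    intro y hy
    rw [iteratedDeriv_succ, (ih.eventuallyEq_of_mem (isOpen_Ioi.mem_nhds hy)).deriv_eq]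
    have hinner : HasDerivAt (fun y : ℝ => 1 + β * y) β y := by
      simpa using ((hasDerivAt_id y).const_mul β).const_add 1
    have hpow := ((hasDerivAt_rpow_const (p := c - m)
      (Or.inl (one_add_mul_pos_of_mem_Ioi hβ hy).ne')).comp y hinner).const_mul
        (C * β ^ m * (descPochhammer ℝ m).eval c)
    refine hpow.deriv.trans ?_
    simp only [descPochhammer_succ_right, Polynomial.eval_mul, Polynomial.eval_sub,
      Polynomial.eval_X, Polynomial.eval_natCast, Nat.cast_succ, sub_add_eq_sub_sub]
    ring

theorem iteratedDeriv_eq_iteratedDeriv_zero_mul (hβ : 0 < β)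
    (hh : EqOn h (fun y => C * (1 + β * y) ^ c) (Ioi (-(1 / β)))) (m : ℕ) {y : ℝ}
    (hy : y ∈ Ioi (-(1 / β))) :
    iteratedDeriv m h y = iteratedDeriv m h 0 * (1 + β * y) ^ (c - m) := by
  have h0 : (0 : ℝ) ∈ Ioi (-(1 / β)) := neg_lt_zero.2 (one_div_pos.2 hβ)
  rw [iteratedDeriv_eqOn_of_eqOn_one_add_mul_rpow hβ hh m hy,
    iteratedDeriv_eqOn_of_eqOn_one_add_mul_rpow hβ hh m h0]
  simp only [mul_zero, add_zero, one_rpow, mul_one]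

theorem integral_Ioi_rpow_mul_iteratedDeriv_of_eqOn_one_add_mul_rpow (hβ : 0 < β)
    (hh : EqOn h (fun y => C * (1 + β * y) ^ c) (Ioi (-(1 / β)))) {m : ℕ} {p b : ℝ}
    (hp : 0 < p) (hb : 0 < b) (hc : c - m = -(p + b)) :
    ∫ v in Ioi 0, v ^ (p - 1) * iteratedDeriv m h v =
      β ^ (-p) * Gamma p * Gamma b / Gamma (p + b) * iteratedDeriv m h 0 := by
  have hIoi : Ioi (0 : ℝ) ⊆ Ioi (-(1 / β)) := Ioi_subset_Ioi (neg_nonpos.2 (by positivity))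
  have hfactor : ∀ v ∈ Ioi (0 : ℝ), v ^ (p - 1) * iteratedDeriv m h v =
      iteratedDeriv m h 0 * (v ^ (p - 1) * (1 + β * v) ^ (-(p + b))) := by
    intro v hv
    rw [iteratedDeriv_eq_iteratedDeriv_zero_mul hβ hh m (hIoi hv), hc]
    ring
  rw [setIntegral_congr_fun measurableSet_Ioi hfactor, integral_const_mul,
    integral_Ioi_rpow_mul_one_add_mul_rpow_neg hβ hp hb]
  ring

end PowerOfAffine

/-- **Theorem 3.4, T type I (Pearson type VII) case.**
For `β ∈ {1,2,4,8}`, `ν > 0` and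
`h(y) = [Γ(β(K(N-1)+ν)/2) / ((πβ⁻¹)^{βK(N-1)/2} Γ(βν/2))] (1+βy)^{-β(K(N-1)+ν)/2}`
(on `(-1/β, ∞)`), the kernel integral
`γ_{t,r} = ∫₀^∞ v^{βK(N-1)/2+t-1} h^{(2t+r)}(v) dv` equals
`[β^{-t-βK(N-1)/2} Γ(t+βK(N-1)/2) Γ(t+r+βν/2) / Γ(2t+r+β(K(N-1)+ν)/2)] h^{(2t+r)}(0)`. -/
theorem affine_shape_kernel_integral_pearsonVII
    (β : ℝ) (hβ : β ∈ ({1, 2, 4, 8} : Set ℝ))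
    (K N : ℕ) (hK : 1 ≤ K) (hN : 2 ≤ N) (t r : ℕ) (ν : ℝ) (hν : 0 < ν)
    (h : ℝ → ℝ)
    (hdef : ∀ y ∈ Set.Ioi (-(1 / β)), h y =
      (Real.Gamma (β * ((K : ℝ) * ((N : ℝ) - 1) + ν) / 2) /
          ((Real.pi * β⁻¹) ^ (β * K * ((N : ℝ) - 1) / 2) * Real.Gamma (β * ν / 2))) *
        (1 + β * y) ^ (-(β * ((K : ℝ) * ((N : ℝ) - 1) + ν) / 2))) :
    ∫ v in Set.Ioi (0 : ℝ),
        v ^ (β * K * ((N : ℝ) - 1) / 2 + t - 1) * iteratedDeriv (2 * t + r) h v =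
      (β ^ (-(t : ℝ) - β * K * ((N : ℝ) - 1) / 2) *
          Real.Gamma ((t : ℝ) + β * K * ((N : ℝ) - 1) / 2) *
          Real.Gamma ((t : ℝ) + r + β * ν / 2) /
          Real.Gamma (2 * (t : ℝ) + r + β * ((K : ℝ) * ((N : ℝ) - 1) + ν) / 2)) *
        iteratedDeriv (2 * t + r) h 0 := by
  have hβpos : 0 < β := by
    rcases hβ with rfl | rfl | rfl | rfl <;> norm_num
  set k := β * K * ((N : ℝ) - 1) / 2
  have hk : 0 < k := by
    have hK' : (0 : ℝ) < K := by exact_mod_cast hK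
    have hN' : (0 : ℝ) < N - 1 := by
      rw [sub_pos]
      exact_mod_cast hN
    positivity
  rw [integral_Ioi_rpow_mul_iteratedDeriv_of_eqOn_one_add_mul_rpow hβpos hdef
      (p := k + t) (b := t + r + β * ν / 2) (by positivity) (by positivity) (by push_cast; ring),
    show -(k + t) = -(t : ℝ) - k by ring, add_comm k,
    show (t : ℝ) + k + (t + r + β * ν / 2) = 2 * t + r + β * (K * (N - 1) + ν) / 2 by ring]
end

section
/- Normalisation of the multimatrix variate Pearson type VII density: Let m ≥ 1, k ≥ 1 and n₀,n₁,…,n_k ≥ 1 be integers and set N = n₀+n₁+⋯+n_k. Then ∫_{ℝ^{n₁×m}} ⋯ ∫_{ℝ^{n_k×m}} (1 + Σ_{i=1}^{k} ‖tᵢ‖²)^{−Nm/2} dt_k ⋯ dt₁ = π^{(N−n₀)m/2} Γ(n₀m/2) / Γ(Nm/2), where the integration is with respect to the product of the Lebesgue measures on the matrix spaces ℝ^{nᵢ×m}. -/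
/-!
Subordination to the Gamma function: for `s > 0` and `r > 0`,
`r^(-s) Γ(s) = ∫₀^∞ u^(s-1) e^(-r u) du`. Taking `r = 1 + ‖t‖²` and exchanging the integrals,
the `t`-integral becomes a Gaussian integral over `ℝ^D`, `D = (N - n₀) m`, equal to
`(π/u)^(D/2)`, and what is left is `π^(D/2) ∫₀^∞ u^(n₀m/2 - 1) e^(-u) du = π^(D/2) Γ(n₀m/2)`.
-/

open MeasureTheory Real Matrix

noncomputable section

/-- The measurable space structure on real matrix spaces (entrywise). -/
instance matrixMeasurableSpace (n m : ℕ) : MeasurableSpace (Matrix (Fin n) (Fin m) ℝ) :=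
  MeasurableSpace.pi (m := fun _ : Fin n => MeasurableSpace.pi)

/-- Squared Frobenius norm `‖A‖² = tr(AᵀA)`. -/
def frobSq {n m : ℕ} (A : Matrix (Fin n) (Fin m) ℝ) : ℝ :=
  Matrix.trace (Aᵀ * A)

/-- Lebesgue measure on the matrix space `ℝ^{n×m}`. -/
def matVolume (n m : ℕ) : Measure (Matrix (Fin n) (Fin m) ℝ) :=
  (volume : Measure ((Fin n) → (Fin m) → ℝ))

open Set in
theorem lintegral_rpow_mul_exp_neg_mul_Ioi {s r : ℝ} (hs : 0 < s) (hr : 0 < r) :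
    ∫⁻ u in Ioi 0, ENNReal.ofReal (u ^ (s - 1) * exp (-(r * u))) =
      ENNReal.ofReal (r ^ (-s) * Gamma s) := by
  have hint : IntegrableOn (fun u : ℝ => u ^ (s - 1) * exp (-(r * u))) (Ioi 0) := by
    simpa only [Real.rpow_one, neg_mul] using
      integrableOn_rpow_mul_exp_neg_mul_rpow (s := s - 1) (p := 1) (by linarith) one_pos hr
  rw [← ofReal_integral_eq_lintegral_ofReal hint
      (ae_restrict_of_forall_mem measurableSet_Ioi fun u hu => by have : 0 < u := hu; positivity),
    integral_rpow_mul_exp_neg_mul_Ioi hs hr, one_div, inv_rpow hr.le, ← rpow_neg hr.le]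

theorem lintegral_ofReal_mul_exp_neg_one_add_mul {X : Type*} [MeasurableSpace X]
    {μ : Measure X} {g : X → ℝ} {u b : ℝ} (hb : 0 ≤ b)
    (hint : Integrable (fun x => exp (-(u * g x))) μ) :
    ∫⁻ x, ENNReal.ofReal (b * exp (-((1 + g x) * u))) ∂μ =
      ENNReal.ofReal (b * exp (-u)) * ENNReal.ofReal (∫ x, exp (-(u * g x)) ∂μ) := by
  have hsplit : ∀ x, b * exp (-((1 + g x) * u)) = b * exp (-u) * exp (-(u * g x)) := fun x => by
    rw [mul_assoc, ← exp_add]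
    ring_nf
  simp_rw [hsplit, ENNReal.ofReal_mul (by positivity : 0 ≤ b * exp (-u))]
  rw [lintegral_const_mul' _ _ ENNReal.ofReal_ne_top,
    ofReal_integral_eq_lintegral_ofReal hint (ae_of_all _ fun x => (exp_pos _).le)]

open Set in
theorem integral_one_add_rpow_neg_of_integral_exp_neg_mul {X : Type*} [MeasurableSpace X]
    {μ : Measure X} [SigmaFinite μ] {g : X → ℝ} (hg : Measurable g) (hg0 : ∀ x, 0 ≤ g x)
    {A a c : ℝ} (hc : 0 < c) (ha : 0 ≤ a)
    (hint : ∀ u, 0 < u → Integrable (fun x => exp (-(u * g x))) μ)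
    (hlap : ∀ u, 0 < u → ∫ x, exp (-(u * g x)) ∂μ = A * u ^ (-a)) :
    ∫ x, (1 + g x) ^ (-(c + a)) ∂μ = A * Gamma c / Gamma (c + a) := by
  have hs : 0 < c + a := by linarith
  have hA : 0 ≤ A := by
    simpa using (hlap 1 one_pos).symm.trans_ge (integral_nonneg fun x => (exp_pos _).le)
  have hΓ : 0 < Gamma (c + a) := Gamma_pos_of_pos hs
  have hinner : ∀ u ∈ Ioi (0 : ℝ),
      ∫⁻ x, ENNReal.ofReal (u ^ (c + a - 1) * exp (-((1 + g x) * u))) ∂μ =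
        ENNReal.ofReal (A * (u ^ (c - 1) * exp (-(1 * u)))) := by
    intro u (hu : 0 < u)
    rw [lintegral_ofReal_mul_exp_neg_one_add_mul (by positivity) (hint u hu), hlap u hu,
      ← ENNReal.ofReal_mul (by positivity)]
    congr 1
    rw [one_mul, show c + a - 1 = c - 1 + a by ring, rpow_add hu, rpow_neg hu.le]
    field_simp
  have key : (∫⁻ x, ENNReal.ofReal ((1 + g x) ^ (-(c + a))) ∂μ) * ENNReal.ofReal (Gamma (c + a))
      = ENNReal.ofReal (A * Gamma c) := calc
    _ = ∫⁻ x, (∫⁻ u in Ioi 0, ENNReal.ofReal (u ^ (c + a - 1) * exp (-((1 + g x) * u)))) ∂μ := by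
      rw [← lintegral_mul_const' _ _ ENNReal.ofReal_ne_top]
      refine lintegral_congr fun x => ?_
      have h1g : 0 < 1 + g x := by linarith [hg0 x]
      rw [lintegral_rpow_mul_exp_neg_mul_Ioi hs h1g, ENNReal.ofReal_mul (by positivity)]
    _ = ∫⁻ u in Ioi 0, ∫⁻ x, ENNReal.ofReal (u ^ (c + a - 1) * exp (-((1 + g x) * u))) ∂μ :=
      lintegral_lintegral_swap (by fun_prop)
    _ = ∫⁻ u in Ioi 0, ENNReal.ofReal (A * (u ^ (c - 1) * exp (-(1 * u)))) :=
      setLIntegral_congr_fun measurableSet_Ioi hinner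
    _ = ENNReal.ofReal (A * Gamma c) := by
      simp_rw [ENNReal.ofReal_mul hA]
      rw [lintegral_const_mul' _ _ ENNReal.ofReal_ne_top,
        lintegral_rpow_mul_exp_neg_mul_Ioi hc one_pos, one_rpow, one_mul]
  have hlint : ∫⁻ x, ENNReal.ofReal ((1 + g x) ^ (-(c + a))) ∂μ
      = ENNReal.ofReal (A * Gamma c / Gamma (c + a)) := by
    rw [ENNReal.ofReal_div_of_pos hΓ, ENNReal.eq_div_iff (by positivity) ENNReal.ofReal_ne_top,
      mul_comm, key]
  rw [integral_eq_lintegral_of_nonneg_ae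
      (ae_of_all _ fun x => rpow_nonneg (by linarith [hg0 x]) _)
      ((hg.const_add 1).pow_const _).aestronglyMeasurable,
    hlint, ENNReal.toReal_ofReal (by positivity)]

/-- `g` has the Gaussian integrals of the squared Euclidean norm on `ℝ^d`. -/
def HasGaussianIntegrals {X : Type*} [MeasurableSpace X] (μ : Measure X) (g : X → ℝ) (d : ℝ) :
    Prop :=
  ∀ u : ℝ, 0 < u →
    Integrable (fun x => exp (-(u * g x))) μ ∧ ∫ x, exp (-(u * g x)) ∂μ = (π / u) ^ (d / 2)

theorem hasGaussianIntegrals_sq : HasGaussianIntegrals volume (fun x : ℝ => x ^ 2) 1 := by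
  intro u hu
  simp_rw [← neg_mul]
  exact ⟨integrable_exp_neg_mul_sq hu, by rw [integral_gaussian, sqrt_eq_rpow]⟩

theorem HasGaussianIntegrals.pi {ι : Type*} [Fintype ι] {X : ι → Type*}
    [∀ i, MeasurableSpace (X i)] {μ : ∀ i, Measure (X i)} [∀ i, SigmaFinite (μ i)]
    {g : ∀ i, X i → ℝ} {d : ι → ℝ} (h : ∀ i, HasGaussianIntegrals (μ i) (g i) (d i)) :
    HasGaussianIntegrals (Measure.pi μ) (fun x => ∑ i, g i (x i)) (∑ i, d i) := by
  intro u hu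
  have hprod : ∀ x : ∀ i, X i, exp (-(u * ∑ i, g i (x i))) = ∏ i, exp (-(u * g i (x i))) := by
    intro x
    rw [Finset.mul_sum, ← Finset.sum_neg_distrib, exp_sum]
  simp_rw [hprod]
  refine ⟨Integrable.fintype_prod_dep fun i => (h i u hu).1, ?_⟩
  rw [integral_fintype_prod_eq_prod (fun i y => exp (-(u * g i y))), Finset.sum_div,
    rpow_sum_of_pos (by positivity)]
  exact Finset.prod_congr rfl fun i _ => (h i u hu).2

theorem HasGaussianIntegrals.integral_one_add_rpow_neg {X : Type*} [MeasurableSpace X]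
    {μ : Measure X} [SigmaFinite μ] {g : X → ℝ} {d : ℝ} (hG : HasGaussianIntegrals μ g d)
    (hg : Measurable g) (hg0 : ∀ x, 0 ≤ g x) {c : ℝ} (hc : 0 < c) (hd : 0 ≤ d) :
    ∫ x, (1 + g x) ^ (-(c + d / 2)) ∂μ = π ^ (d / 2) * Gamma c / Gamma (c + d / 2) :=
  integral_one_add_rpow_neg_of_integral_exp_neg_mul hg hg0 hc (by positivity)
    (fun u hu => (hG u hu).1) fun u hu => by
      rw [(hG u hu).2, div_rpow pi_pos.le hu.le, rpow_neg hu.le, div_eq_mul_inv]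

theorem frobSq_eq_sum_sq {n m : ℕ} (A : Matrix (Fin n) (Fin m) ℝ) :
    frobSq A = ∑ a, ∑ b, A a b ^ 2 := by
  simp only [frobSq, trace, diag, mul_apply, transpose_apply, sq]
  exact Finset.sum_comm

theorem frobSq_nonneg {n m : ℕ} (A : Matrix (Fin n) (Fin m) ℝ) : 0 ≤ frobSq A := by
  rw [frobSq_eq_sum_sq]
  positivity

theorem measurable_frobSq {n m : ℕ} : Measurable (frobSq : Matrix (Fin n) (Fin m) ℝ → ℝ) := by
  simp_rw [funext frobSq_eq_sum_sq]
  fun_prop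

instance (n m : ℕ) : SigmaFinite (matVolume n m) :=
  inferInstanceAs (SigmaFinite (volume : Measure (Fin n → Fin m → ℝ)))

theorem hasGaussianIntegrals_frobSq (n m : ℕ) :
    HasGaussianIntegrals (matVolume n m) frobSq (n * m) := by
  have h := HasGaussianIntegrals.pi fun _ : Fin n =>
    HasGaussianIntegrals.pi fun _ : Fin m => hasGaussianIntegrals_sq
  simp only [Finset.sum_const, Finset.card_univ, Fintype.card_fin, nsmul_eq_mul, mul_one] at h
  rw [show frobSq = fun A : Matrix (Fin n) (Fin m) ℝ => ∑ a, ∑ b, A a b ^ 2 from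
    funext frobSq_eq_sum_sq]
  exact h

theorem pearsonVII_normalisation_general
    (m k : ℕ) (hm : 1 ≤ m)
    (n : Fin (k + 1) → ℕ) (hn : ∀ i, 1 ≤ n i)
    (N : ℕ) (hN : N = ∑ i, n i) :
    ∫ t, (1 + ∑ i : Fin k, frobSq (t i)) ^ (-((N : ℝ) * m / 2))
        ∂(Measure.pi fun i : Fin k => matVolume (n i.succ) m) =
      Real.pi ^ (((N : ℝ) - (n 0 : ℝ)) * m / 2) * Real.Gamma ((n 0 : ℝ) * m / 2) /
        Real.Gamma ((N : ℝ) * m / 2) := by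
  set D : ℝ := ∑ i : Fin k, (n i.succ : ℝ) * m
  have hc : 0 < (n 0 : ℝ) * m / 2 := by
    have : (0 : ℝ) < n 0 := by exact_mod_cast hn 0
    have : (0 : ℝ) < m := by exact_mod_cast hm
    positivity
  have hN' : (N : ℝ) * m / 2 = n 0 * m / 2 + D / 2 := by
    rw [hN, Nat.cast_sum, Fin.sum_univ_succ, add_mul, Finset.sum_mul]
    ring
  have hND : ((N : ℝ) - n 0) * m / 2 = D / 2 := by
    rw [sub_mul, sub_div, hN']
    ring
  rw [hN', hND]
  exact (HasGaussianIntegrals.pi fun i => hasGaussianIntegrals_frobSq (n i.succ) m)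
    |>.integral_one_add_rpow_neg
      (Finset.measurable_sum _ fun i _ => measurable_frobSq.comp (measurable_pi_apply i))
      (fun t => Finset.sum_nonneg fun i _ => frobSq_nonneg _) hc (by positivity)

/-- **Normalisation of the multimatrix variate Pearson type VII density.**
`∫⋯∫ (1+Σᵢ‖tᵢ‖²)^{-Nm/2} dt₁⋯dt_k = π^{(N-n₀)m/2} Γ(n₀m/2)/Γ(Nm/2)`, integrating with
respect to the product of the Lebesgue measures on the matrix spaces `ℝ^{nᵢ×m}`. -/
theorem pearsonVII_normalisation
    (m k : ℕ) (hm : 1 ≤ m) (hk : 1 ≤ k)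
    (n : Fin (k + 1) → ℕ) (hn : ∀ i, 1 ≤ n i)
    (N : ℕ) (hN : N = ∑ i, n i) :
    ∫ t, (1 + ∑ i : Fin k, frobSq (t i)) ^ (-((N : ℝ) * m / 2))
        ∂(Measure.pi fun i : Fin k => matVolume (n i.succ) m) =
      Real.pi ^ (((N : ℝ) - (n 0 : ℝ)) * m / 2) * Real.Gamma ((n 0 : ℝ) * m / 2) /
        Real.Gamma ((N : ℝ) * m / 2) :=
  pearsonVII_normalisation_general m k hm n hn N hN
end
end
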